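/- arXiv:1401.5234 — 3 statements merged into one kernel-verified Lean document; each statement's English description precedes it below -/
import Mathlib

section
/- Let q ≥ 3, m ≥ 3, and let S be a subset of 𝔽_q^m with #S = u·q^n < q^m, where q does not divide u and n ≥ 1. Suppose integers w < v < u are given such that for every affine hyperplane H of 𝔽_q^m, the cardinality #(S ∩ H) is either 0, or w·q^(n-1), or v·q^(n-1), or at least u·q^(n-1). Then there exists an affine hyperplane H with #(S ∩ H) equal to 0, w·q^(n-1), or v·q^(n-1). -/
/-- An affine hyperplane of `𝔽_q^m`: a level set of a nonzero linear form. -/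
def IsAffineHyperplane {F : Type*} [Field F] {m : ℕ} (H : Set (Fin m → F)) : Prop :=
  ∃ (ℓ : (Fin m → F) →ₗ[F] F) (c : F), ℓ ≠ 0 ∧ H = {x | ℓ x = c}

/-! If every hyperplane met `S` in at least `u q^(n-1)` points, pick `p ∉ S` and count incidences
between `S` and the hyperplanes `{x | f x = f p}` for the `q^m - 1` nonzero functionals `f`:
each `x ∈ S` lies on those with `f (x - p) = 0`, of which there are `q^(m-1) - 1`. Hence
`(q^m - 1) u q^(n-1) ≤ u q^n (q^(m-1) - 1) ≤ u q^(n-1) (q^m - q)`, which is absurd. -/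

open Module Finset

section HyperplaneCounting

variable {F V : Type*} [Field F] [Fintype F] [AddCommGroup V] [Module F V]

theorem card_dual_erase_zero [Fintype (Dual F V)] [DecidableEq (Dual F V)] :
    #((univ : Finset (Dual F V)).erase 0) = Fintype.card F ^ finrank F V - 1 := by
  rw [card_erase_of_mem (mem_univ 0), card_univ, card_eq_pow_finrank (K := F),
    Subspace.dual_finrank_eq]

variable [FiniteDimensional F V]

theorem Module.Dual.natCard_ker {f : Dual F V} (hf : f ≠ 0) :
    Nat.card (LinearMap.ker f) = Fintype.card F ^ (finrank F V - 1) := by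
  have hrange : finrank F (LinearMap.range f) = 1 := by
    rw [LinearMap.range_eq_top.2 (LinearMap.surjective_of_ne_zero hf), finrank_top,
      finrank_self]
  have hker := LinearMap.finrank_range_add_finrank_ker f
  rw [Module.natCard_eq_pow_finrank (K := F), Nat.card_eq_fintype_card]
  congr 1
  omega

variable [Fintype (Dual F V)] [DecidableEq (Dual F V)] [DecidableEq F]

theorem card_filter_dual_apply_eq_zero {v : V} (hv : v ≠ 0) :
    #{f ∈ (univ : Finset (Dual F V)).erase 0 | f v = 0} =
      Fintype.card F ^ (finrank F V - 1) - 1 := by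
  have hev : Dual.eval F V v ≠ 0 := by rwa [Ne, Module.eval_apply_eq_zero_iff]
  have hker : Nat.card {f : Dual F V // f v = 0} = Fintype.card F ^ (finrank F V - 1) := by
    rw [← Subspace.dual_finrank_eq]
    exact Dual.natCard_ker hev
  rw [Nat.card_eq_fintype_card, Fintype.card_subtype] at hker
  rw [filter_erase, card_erase_of_mem (by simp), hker]

theorem sum_card_filter_apply_eq_apply (S : Finset V) {p : V} (hp : p ∉ S) :
    ∑ f ∈ (univ : Finset (Dual F V)).erase 0, #{x ∈ S | f x = f p} =
      #S * (Fintype.card F ^ (finrank F V - 1) - 1) := by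
  calc ∑ f ∈ (univ : Finset (Dual F V)).erase 0, #{x ∈ S | f x = f p}
      = ∑ x ∈ S, #{f ∈ (univ : Finset (Dual F V)).erase 0 | f (x - p) = 0} := by
        simp only [card_filter, map_sub, sub_eq_zero]
        exact sum_comm
    _ = ∑ x ∈ S, (Fintype.card F ^ (finrank F V - 1) - 1) := by
        refine sum_congr rfl fun x hx => card_filter_dual_apply_eq_zero ?_
        exact sub_ne_zero.2 fun h => hp (h ▸ hx)
    _ = #S * (Fintype.card F ^ (finrank F V - 1) - 1) := by rw [sum_const, smul_eq_mul]

theorem mul_le_of_forall_le_card_hyperplane (S : Finset V) {p : V} (hp : p ∉ S) {k : ℕ}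
    (hk : ∀ f : Dual F V, f ≠ 0 → k ≤ #{x ∈ S | f x = f p}) :
    (Fintype.card F ^ finrank F V - 1) * k ≤ #S * (Fintype.card F ^ (finrank F V - 1) - 1) := by
  rw [← sum_card_filter_apply_eq_apply S hp, ← card_dual_erase_zero, ← smul_eq_mul]
  exact card_nsmul_le_sum _ _ _ fun f hf => hk f (ne_of_mem_erase hf)

end HyperplaneCounting

theorem mul_pow_mul_pow_pred_sub_one_lt {q d u : ℕ} (n : ℕ) (hq : 2 ≤ q) (hd : 1 ≤ d) (hu : 0 < u) :
    u * q ^ n * (q ^ (d - 1) - 1) < (q ^ d - 1) * (u * q ^ (n - 1)) := by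
  have hqn : q ^ n ≤ q ^ (n - 1) * q := by
    rw [← pow_succ]; exact Nat.pow_le_pow_right (by omega) (by omega)
  have hqd : q ^ d = q ^ (d - 1) * q := by rw [← pow_succ]; congr 1; omega
  have hd1 : 1 ≤ q ^ (d - 1) := Nat.one_le_pow _ _ (by omega)
  have hn1 : 0 < q ^ (n - 1) := by positivity
  rw [hqd]
  calc u * q ^ n * (q ^ (d - 1) - 1) ≤ u * (q ^ (n - 1) * q) * (q ^ (d - 1) - 1) := by gcongr
    _ < _ := by
      zify [hd1, Nat.one_le_iff_ne_zero.2 (by positivity : q ^ (d - 1) * q ≠ 0)]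
      have : (0:ℤ) < u * q ^ (n - 1) := by positivity
      nlinarith

theorem stmt0_general {F : Type*} [Field F] [Fintype F] (q : ℕ) (hq : Fintype.card F = q)
    (m : ℕ) (S : Set (Fin m → F))
    (u n w v : ℕ)
    (hcard : S.ncard = u * q ^ n) (hlt : u * q ^ n < q ^ m)
    (hvu : v < u)
    (hH : ∀ H : Set (Fin m → F), IsAffineHyperplane H →
      (S ∩ H).ncard = 0 ∨ (S ∩ H).ncard = w * q ^ (n - 1) ∨
      (S ∩ H).ncard = v * q ^ (n - 1) ∨ u * q ^ (n - 1) ≤ (S ∩ H).ncard) :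
    ∃ H : Set (Fin m → F), IsAffineHyperplane H ∧
      ((S ∩ H).ncard = 0 ∨ (S ∩ H).ncard = w * q ^ (n - 1) ∨
       (S ∩ H).ncard = v * q ^ (n - 1)) := by
  classical
  by_contra! hcon
  obtain ⟨T, rfl⟩ := S.toFinite.exists_finset_coe
  rw [Set.ncard_coe_finset] at hcard
  have hm : 1 ≤ m := by
    rw [Nat.one_le_iff_ne_zero]
    rintro rfl
    have : 0 < q ^ n := pow_pos (hq ▸ Fintype.card_pos) n
    rw [pow_zero] at hlt
    nlinarith
  obtain ⟨p, hp⟩ : ∃ p, p ∉ T := by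
    by_contra! h
    rw [eq_univ_of_forall h, card_univ, Fintype.card_fun, Fintype.card_fin, hq] at hcard
    omega
  have : Finite (Dual F (Fin m → F)) := Module.finite_of_finite F
  let _ := Fintype.ofFinite (Dual F (Fin m → F))
  have hbound := mul_le_of_forall_le_card_hyperplane T hp (k := u * q ^ (n - 1)) fun f hf => by
    have hyp : IsAffineHyperplane {x | f x = f p} := ⟨f, f p, hf, rfl⟩
    obtain ⟨h0, hw, hv⟩ := hcon _ hyp
    rw [← Set.ncard_coe_finset, coe_filter]
    exact (((hH _ hyp).resolve_left h0).resolve_left hw).resolve_left hv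
  rw [finrank_fin_fun, hq, hcard] at hbound
  exact (mul_pow_mul_pow_pred_sub_one_lt n (hq ▸ Fintype.one_lt_card) hm (by omega)).not_ge hbound

theorem stmt0 {F : Type*} [Field F] [Fintype F] (q : ℕ) (hq : Fintype.card F = q)
    (hq3 : 3 ≤ q) (m : ℕ) (hm : 3 ≤ m) (S : Set (Fin m → F))
    (u n w v : ℕ) (hn : 1 ≤ n) (hu : ¬ q ∣ u)
    (hcard : S.ncard = u * q ^ n) (hlt : u * q ^ n < q ^ m)
    (hwv : w < v) (hvu : v < u)
    (hH : ∀ H : Set (Fin m → F), IsAffineHyperplane H →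
      (S ∩ H).ncard = 0 ∨ (S ∩ H).ncard = w * q ^ (n - 1) ∨
      (S ∩ H).ncard = v * q ^ (n - 1) ∨ u * q ^ (n - 1) ≤ (S ∩ H).ncard) :
    ∃ H : Set (Fin m → F), IsAffineHyperplane H ∧
      ((S ∩ H).ncard = 0 ∨ (S ∩ H).ncard = w * q ^ (n - 1) ∨
       (S ∩ H).ncard = v * q ^ (n - 1)) :=
  stmt0_general q hq m S u n w v hcard hlt hvu hH
end

section
/- Let q ≥ 5 be a prime power, m ≥ 2, 1 ≤ a ≤ m−1. Define f : 𝔽_q^m → 𝔽_q by f(x) = ∏_{i=1}^{a−1}(1 − x_i^{q−1}) · ∏_{j=1}^{q−2}(x_a − b_j) · (x_{a+1} − u)(x_{a+1} − v), where b₁, …, b_{q−2} are distinct elements of 𝔽_q and u ≠ v in 𝔽_q. Then f has degree at most a(q−1)+1 and its Hamming weight |f| (number of points where f is nonzero) equals 2(q−2)·q^{m−a−1}, and moreover 2(q−2)·q^{m−a−1} > q^{m−a}. -/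
/-!
`f` is a product of univariate functions of distinct coordinates, so its support is a product
set: `x_i = 0` for `i < a`, `x_a` avoids the `q - 2` values `b_j` (2 choices), `x_{a+1}` avoids
`u, v` (`q - 2` choices), and the remaining `m - a - 1` coordinates are free. The same product,
read as a polynomial, has degree `(a - 1)(q - 1) + (q - 2) + 2`.
-/

/-- The Hamming weight of a function: the number of points where it is nonzero. -/
noncomputable def hamWt {α F : Type*} [Zero F] (f : α → F) : ℕ := {x | f x ≠ 0}.ncard

open Finset MvPolynomial

theorem hamWt_eq_card_filter {α F : Type*} [Fintype α] [Zero F] [DecidableEq F] (f : α → F) :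
    hamWt f = #{x | f x ≠ 0} := by
  rw [hamWt, ← Set.ncard_coe_finset, coe_filter]
  simp only [Finset.mem_univ, true_and]

theorem hamWt_const_one {α F : Type*} [Zero F] [One F] [NeZero (1 : F)] :
    hamWt (fun _ : α => (1 : F)) = Nat.card α := by
  simp [hamWt]

theorem hamWt_pi_prod {ι α F : Type*} [Fintype ι] [DecidableEq ι] [Fintype α]
    [CommMonoidWithZero F] [Nontrivial F] [NoZeroDivisors F] (g : ι → α → F) :
    hamWt (fun x : ι → α => ∏ i, g i (x i)) = ∏ i, hamWt (g i) := by
  classical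
  simp only [hamWt_eq_card_filter, ← Fintype.card_piFinset]
  congr 1
  ext x
  simp [prod_ne_zero_iff]

section FiniteField

variable {F : Type*} [Field F] [Fintype F]

theorem hamWt_one_sub_pow_card_sub_one :
    hamWt (fun t : F => 1 - t ^ (Fintype.card F - 1)) = 1 := by
  classical
  rw [hamWt_eq_card_filter, card_eq_one]
  refine ⟨0, ?_⟩
  ext t
  by_cases ht : t = 0
  · simp [ht, zero_pow (Nat.sub_ne_zero_of_lt Fintype.one_lt_card)]
  · simp [ht, FiniteField.pow_card_sub_one_eq_one t ht]

theorem hamWt_prod_sub_of_injective {ι : Type*} [Fintype ι] {b : ι → F}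
    (hb : Function.Injective b) :
    hamWt (fun t : F => ∏ j, (t - b j)) = Fintype.card F - Fintype.card ι := by
  classical
  have hsupp : ({t | ∏ j, (t - b j) ≠ 0} : Finset F) = (univ.image b)ᶜ := by
    ext t
    simp [prod_ne_zero_iff, sub_eq_zero, eq_comm (a := t)]
  rw [hamWt_eq_card_filter, hsupp, card_compl, card_image_of_injective _ hb, card_univ]

theorem hamWt_mul_sub_sub {u v : F} (huv : u ≠ v) :
    hamWt (fun t : F => (t - u) * (t - v)) = Fintype.card F - 2 := by
  have hinj : Function.Injective ![u, v] := by
    intro i j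
    fin_cases i <;> fin_cases j <;> simp [huv, huv.symm]
  simpa [Fin.prod_univ_two] using hamWt_prod_sub_of_injective hinj

end FiniteField

section CoordFactor

variable {F ι : Type*} [Field F] [Fintype ι]

/-- Coordinates are numbered from `0`, so the paper's `x_a` and `x_{a+1}` are `x (a - 1)` and
`x a`. -/
def coordFactor (e a : ℕ) (b : ι → F) (u v : F) (n : ℕ) : F → F :=
  if n < a - 1 then fun t => 1 - t ^ e
  else if n = a - 1 then fun t => ∏ j, (t - b j)
  else if n = a then fun t => (t - u) * (t - v)
  else fun _ => 1

theorem prod_coordFactor (e : ℕ) {a m : ℕ} (ha : 1 ≤ a) (hm : a + 1 ≤ m) (b : ι → F) (u v : F)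
    (x : Fin m → F) :
    ∏ i : Fin m, coordFactor e a b u v i (x i) =
      (∏ i : Fin (a - 1), (1 - x (Fin.castLE (by omega) i) ^ e)) *
        (∏ j, (x ⟨a - 1, by omega⟩ - b j)) * ((x ⟨a, by omega⟩ - u) * (x ⟨a, by omega⟩ - v)) := by
  obtain ⟨p, rfl⟩ := Nat.exists_eq_add_of_le' ha
  obtain ⟨k, rfl⟩ := Nat.exists_eq_add_of_le hm
  simp only [Nat.add_sub_cancel]
  rw [Fin.prod_univ_add, Fin.prod_univ_castSucc, Fin.prod_univ_castSucc]
  have htail : ∀ i : ℕ, ¬ p + 1 + 1 + i < p ∧ p + 1 + 1 + i ≠ p ∧ p + 1 + 1 + i ≠ p + 1 := by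
    omega
  simp [coordFactor, htail]
  rfl

theorem prod_hamWt_coordFactor [Fintype F] {a m : ℕ} (ha : 1 ≤ a) (hm : a + 1 ≤ m) {b : ι → F}
    (hb : Function.Injective b) {u v : F} (huv : u ≠ v) :
    ∏ i : Fin m, hamWt (coordFactor (Fintype.card F - 1) a b u v i) =
      (Fintype.card F - Fintype.card ι) * (Fintype.card F - 2) * Fintype.card F ^ (m - a - 1) := by
  obtain ⟨p, rfl⟩ := Nat.exists_eq_add_of_le' ha
  obtain ⟨k, rfl⟩ := Nat.exists_eq_add_of_le hm
  rw [Fin.prod_univ_add, Fin.prod_univ_castSucc, Fin.prod_univ_castSucc,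
    show p + 1 + 1 + k - (p + 1) - 1 = k by omega]
  have htail : ∀ i : ℕ, ¬ p + 1 + 1 + i < p ∧ p + 1 + 1 + i ≠ p ∧ p + 1 + 1 + i ≠ p + 1 := by
    omega
  simp [coordFactor, htail, hamWt_one_sub_pow_card_sub_one, hamWt_prod_sub_of_injective hb,
    hamWt_mul_sub_sub huv, hamWt_const_one]

end CoordFactor

section Degree

theorem totalDegree_prod_le_card_mul {σ R ι : Type*} [CommSemiring R] (s : Finset ι)
    (p : ι → MvPolynomial σ R) {d : ℕ} (hd : ∀ i ∈ s, (p i).totalDegree ≤ d) :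
    (∏ i ∈ s, p i).totalDegree ≤ #s * d :=
  (totalDegree_finsetProd s p).trans (sum_le_card_nsmul s _ d hd)

variable {σ R : Type*} [CommRing R] [Nontrivial R]

theorem totalDegree_one_sub_X_pow_le (i : σ) (n : ℕ) :
    (1 - X i ^ n : MvPolynomial σ R).totalDegree ≤ n :=
  (totalDegree_sub _ _).trans <| max_le (by simp) (totalDegree_X_pow i n).le

theorem totalDegree_X_sub_C_le (i : σ) (c : R) :
    (X i - C c : MvPolynomial σ R).totalDegree ≤ 1 :=
  (totalDegree_sub_C_le _ _).trans (totalDegree_X i).le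

end Degree

theorem exists_totalDegree_le_eval_eq {F ι : Type*} [Field F] [Fintype ι] (e : ℕ) {a m : ℕ}
    (hm : a + 1 ≤ m) (b : ι → F) (u v : F) :
    ∃ P : MvPolynomial (Fin m) F, P.totalDegree ≤ (a - 1) * e + Fintype.card ι + 2 ∧
      ∀ x, eval x P = (∏ i : Fin (a - 1), (1 - x (Fin.castLE (by omega) i) ^ e)) *
        (∏ j, (x ⟨a - 1, by omega⟩ - b j)) * ((x ⟨a, by omega⟩ - u) * (x ⟨a, by omega⟩ - v)) := by
  refine ⟨(∏ i : Fin (a - 1), (1 - X (Fin.castLE (by omega) i) ^ e)) *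
      (∏ j, (X (⟨a - 1, by omega⟩ : Fin m) - C (b j))) *
      ((X (⟨a, hm⟩ : Fin m) - C u) * (X ⟨a, hm⟩ - C v)), ?_, fun x => by simp⟩
  refine (totalDegree_mul _ _).trans (add_le_add ((totalDegree_mul _ _).trans (add_le_add ?_ ?_))
    ((totalDegree_mul _ _).trans ?_))
  · exact (totalDegree_prod_le_card_mul _ _ fun i _ => totalDegree_one_sub_X_pow_le _ e).trans_eq
      (by simp)
  · exact (totalDegree_prod_le_card_mul _ _ fun j _ => totalDegree_X_sub_C_le _ (b j)).trans_eq
      (by simp)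
  · exact add_le_add (totalDegree_X_sub_C_le _ u) (totalDegree_X_sub_C_le _ v)

theorem pow_succ_lt_two_mul_sub_two_mul_pow {q : ℕ} (hq : 5 ≤ q) (n : ℕ) :
    q ^ (n + 1) < 2 * (q - 2) * q ^ n := by
  rw [pow_succ, mul_comm]
  exact Nat.mul_lt_mul_of_pos_right (by omega) (by positivity)

theorem stmt3 {F : Type*} [Field F] [Fintype F] (q : ℕ) (hq : Fintype.card F = q)
    (hq5 : 5 ≤ q) (m a : ℕ) (ha1 : 1 ≤ a) (ham : a ≤ m - 1)
    (b : Fin (q - 2) → F) (hb : Function.Injective b)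
    (u v : F) (huv : u ≠ v)
    (f : (Fin m → F) → F)
    (hf : ∀ x : Fin m → F,
      f x = (∏ i : Fin (a - 1), (1 - (x (Fin.castLE (by omega) i)) ^ (q - 1))) *
            (∏ j : Fin (q - 2), (x ⟨a - 1, by omega⟩ - b j)) *
            ((x ⟨a, by omega⟩ - u) * (x ⟨a, by omega⟩ - v))) :
    (∃ P : MvPolynomial (Fin m) F, P.totalDegree ≤ a * (q - 1) + 1 ∧
      ∀ x, MvPolynomial.eval x P = f x) ∧
    hamWt f = 2 * (q - 2) * q ^ (m - a - 1) ∧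
    q ^ (m - a) < 2 * (q - 2) * q ^ (m - a - 1) := by
  have hm : a + 1 ≤ m := by omega
  refine ⟨?_, ?_, ?_⟩
  · obtain ⟨P, hdeg, heval⟩ := exists_totalDegree_le_eval_eq (q - 1) hm b u v
    refine ⟨P, hdeg.trans ?_, fun x => (heval x).trans (hf x).symm⟩
    have : q - 1 ≤ a * (q - 1) := Nat.le_mul_of_pos_left _ ha1
    rw [Fintype.card_fin, Nat.sub_one_mul]
    omega
  · have hprod : f = fun x => ∏ i : Fin m, coordFactor (q - 1) a b u v i (x i) :=
      funext fun x => (hf x).trans (prod_coordFactor _ ha1 hm b u v x).symm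
    have hwt := prod_hamWt_coordFactor (F := F) ha1 hm hb huv
    rw [hq, Fintype.card_fin] at hwt
    rw [hprod, hamWt_pi_prod, hwt]
    congr 2
    omega
  · rw [show m - a = m - a - 1 + 1 by omega]
    exact pow_succ_lt_two_mul_sub_two_mul_pow hq5 _
end

section
/- Let q ≥ 4 be a prime power. Let a₁x+b₁y, a₂x+b₂y, a₃x+b₃y+c be three affine forms on 𝔽_q² with (a_i,b_i) ≠ (0,0), pairwise non-proportional linear parts (a_i b_j − a_j b_i ≠ 0 for i ≠ j), and c ≠ 0. Then the function f(x,y) = (a₁x+b₁y)(a₂x+b₂y)(a₃x+b₃y+c) has Hamming weight exactly q² − 3q + 3. -/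
open Set

theorem Set.ncard_union_union_add_three {α : Type*} [Finite α] {s t u : Set α}
    (hst : (s ∩ t).ncard = 1) (hsu : (s ∩ u).ncard = 1) (htu : (t ∩ u).ncard = 1)
    (hstu : s ∩ t ∩ u = ∅) :
    (s ∪ t ∪ u).ncard + 3 = s.ncard + t.ncard + u.ncard := by
  have hdisj : Disjoint (s ∩ u) (t ∩ u) := by
    rw [Set.disjoint_iff_inter_eq_empty, ← hstu]
    ext; simp only [mem_inter_iff]; tauto
  have h₃ : ((s ∪ t) ∩ u).ncard = 2 := by
    rw [union_inter_distrib_right, ncard_union_eq hdisj, hsu, htu]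
  have := ncard_union_add_ncard_inter s t
  have := ncard_union_add_ncard_inter (s ∪ t) u
  omega

section AffineLine

variable {F : Type*} [Field F]

def affineLine (a b d : F) : Set (F × F) := {p | a * p.1 + b * p.2 = d}

theorem ncard_affineLine {a b : F} (d : F) (h : a ≠ 0 ∨ b ≠ 0) :
    (affineLine a b d).ncard = Nat.card F := by
  rcases h with ha | hb
  · have hrange : affineLine a b d = range fun y => ((d - b * y) / a, y) := by
      ext ⟨x, y⟩
      simp only [affineLine, mem_ofPred_eq, mem_range, Prod.mk.injEq, exists_eq_right]
      rw [div_eq_iff ha]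
      constructor <;> intro h <;> linear_combination -h
    rw [hrange, ncard_range_of_injective fun y y' h => (Prod.mk.inj h).2]
  · have hrange : affineLine a b d = range fun x => (x, (d - a * x) / b) := by
      ext ⟨x, y⟩
      simp only [affineLine, mem_ofPred_eq, mem_range, Prod.mk.injEq, exists_eq_left]
      rw [div_eq_iff hb]
      constructor <;> intro h <;> linear_combination -h
    rw [hrange, ncard_range_of_injective fun x x' h => (Prod.mk.inj h).1]

/-- Cramer's rule. -/
theorem affineLine_inter_affineLine {a₁ b₁ a₂ b₂ : F} (d₁ d₂ : F)
    (hdet : a₁ * b₂ - a₂ * b₁ ≠ 0) :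
    affineLine a₁ b₁ d₁ ∩ affineLine a₂ b₂ d₂ =
      {((d₁ * b₂ - d₂ * b₁) / (a₁ * b₂ - a₂ * b₁), (a₁ * d₂ - a₂ * d₁) / (a₁ * b₂ - a₂ * b₁))} := by
  ext ⟨x, y⟩
  simp only [affineLine, mem_inter_iff, mem_ofPred_eq, mem_singleton_iff, Prod.mk.injEq]
  rw [eq_div_iff hdet, eq_div_iff hdet]
  constructor
  · rintro ⟨h₁, h₂⟩
    exact ⟨by linear_combination b₂ * h₁ - b₁ * h₂, by linear_combination a₁ * h₂ - a₂ * h₁⟩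
  · rintro ⟨hx, hy⟩
    refine ⟨mul_right_cancel₀ hdet ?_, mul_right_cancel₀ hdet ?_⟩
    · linear_combination a₁ * hx + b₁ * hy
    · linear_combination a₂ * hx + b₂ * hy

theorem ncard_affineLine_inter_affineLine {a₁ b₁ a₂ b₂ : F} (d₁ d₂ : F)
    (hdet : a₁ * b₂ - a₂ * b₁ ≠ 0) :
    (affineLine a₁ b₁ d₁ ∩ affineLine a₂ b₂ d₂).ncard = 1 := by
  rw [affineLine_inter_affineLine d₁ d₂ hdet, ncard_singleton]

end AffineLine

theorem stmt8_general {F : Type*} [Field F] [Fintype F] (q : ℕ) (hq : Fintype.card F = q)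
    (hq4 : 4 ≤ q) (a b : Fin 3 → F) (c : F) (hc : c ≠ 0)
    (hnp : ∀ i j, i ≠ j → a i * b j - a j * b i ≠ 0)
    (f : F × F → F)
    (hf : ∀ p : F × F, f p =
      (a 0 * p.1 + b 0 * p.2) * (a 1 * p.1 + b 1 * p.2) * (a 2 * p.1 + b 2 * p.2 + c)) :
    hamWt f = q ^ 2 - 3 * q + 3 := by
  have hline : ∀ i, a i ≠ 0 ∨ b i ≠ 0 := fun i => by
    obtain ⟨j, hj⟩ := exists_ne i
    by_contra! h
    exact hnp i j hj.symm (by simp [h])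
  have hzeros : {p | f p ≠ 0}ᶜ = affineLine (a 0) (b 0) 0 ∪ affineLine (a 1) (b 1) 0 ∪
      affineLine (a 2) (b 2) (-c) := by
    ext p
    simp only [mem_compl_iff, mem_ofPred_eq, not_not, hf, mul_eq_zero, mem_union, affineLine,
      eq_neg_iff_add_eq_zero]
  have hcenter : affineLine (a 0) (b 0) 0 ∩ affineLine (a 1) (b 1) 0 = {0} := by
    rw [affineLine_inter_affineLine 0 0 (hnp 0 1 (by decide))]
    simp
  have htriangle := ncard_union_union_add_three
    (ncard_affineLine_inter_affineLine 0 0 (hnp 0 1 (by decide)))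
    (ncard_affineLine_inter_affineLine 0 (-c) (hnp 0 2 (by decide)))
    (ncard_affineLine_inter_affineLine 0 (-c) (hnp 1 2 (by decide)))
    (by rw [hcenter]; simpa [affineLine] using hc)
  rw [← hzeros, ncard_affineLine _ (hline 0), ncard_affineLine _ (hline 1),
    ncard_affineLine _ (hline 2), Nat.card_eq_fintype_card, hq] at htriangle
  have hcompl := ncard_add_ncard_compl {p | f p ≠ 0}
  rw [Nat.card_eq_fintype_card, Fintype.card_prod, hq] at hcompl
  have hq3 : 3 * q ≤ q * q := Nat.mul_le_mul_right q (by omega)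
  rw [hamWt, sq]
  omega

theorem stmt8 {F : Type*} [Field F] [Fintype F] (q : ℕ) (hq : Fintype.card F = q)
    (hq4 : 4 ≤ q) (a b : Fin 3 → F) (c : F) (hc : c ≠ 0)
    (hab : ∀ i, (a i, b i) ≠ (0, 0))
    (hnp : ∀ i j, i ≠ j → a i * b j - a j * b i ≠ 0)
    (f : F × F → F)
    (hf : ∀ p : F × F, f p =
      (a 0 * p.1 + b 0 * p.2) * (a 1 * p.1 + b 1 * p.2) * (a 2 * p.1 + b 2 * p.2 + c)) :
    hamWt f = q ^ 2 - 3 * q + 3 :=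
  stmt8_general q hq hq4 a b c hc hnp f hf
end
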